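/- (The Q_J bound, Lemma 6 of the paper.) Let u, v, w be weights, w dyadic doubling with constant D(w), (uw, vw) ∈ A₂^d(w) with characteristic A, and suppose that for all dyadic J, (1/|J|)∑_{I∈D(J)} |I| |Δ_I w / ⟨w⟩_I|² ⟨u⁻¹⟩_I ≤ C ⟨u⁻¹⟩_J. Then Q_J(u,v,w) := (1/|J|)∑_{I∈D(J), I≠J} |Ĩ| (⟨u⁻¹⟩_I/⟨w⟩_I)² |1 − ⟨w⟩_I/⟨w⟩_{Ĩ}|² ⟨vw²⟩_{Ĩ} ≤ C' ⟨u⁻¹⟩_J, where C' depends only on D(w), A, and C. -/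

import Mathlib

open MeasureTheory Set Real ENNReal

/-- The dyadic interval `[k·2^{-j}, (k+1)·2^{-j})`. -/
noncomputable def dI (k j : ℤ) : Set ℝ :=
  Set.Ico ((k : ℝ) * (2 : ℝ) ^ (-j)) (((k : ℝ) + 1) * (2 : ℝ) ^ (-j))

/-- The dyadic parent of `dI k j`. -/
noncomputable def dpar (k j : ℤ) : Set ℝ := dI (Int.fdiv k 2) (j - 1)

/-- Length of a dyadic interval of generation `j`. -/
noncomputable def len (j : ℤ) : ℝ := (2 : ℝ) ^ (-j)

/-- The Lebesgue average of `g` over `dI k j`. -/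
noncomputable def lavg (g : ℝ → ℝ) (k j : ℤ) : ℝ := (∫ x in dI k j, g x) / len j

/-- The Lebesgue average of `g` over the parent of `dI k j`. -/
noncomputable def pavg (g : ℝ → ℝ) (k j : ℤ) : ℝ := (∫ x in dpar k j, g x) / len (j - 1)

/-- `Δ_I w = ⟨w⟩_{I⁺} − ⟨w⟩_{I⁻}` for `I = dI k j`. -/
noncomputable def Δ (g : ℝ → ℝ) (k j : ℤ) : ℝ :=
  lavg g (2 * k + 1) (j + 1) - lavg g (2 * k) (j + 1)

/-!
Let `Ĩ` be the parent of `I`. Since `⟨w⟩_Ĩ` is the mean of the averages of `w` over the two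
children of `Ĩ`, `|1 - ⟨w⟩_I/⟨w⟩_Ĩ| = |Δ_Ĩ w| / (2⟨w⟩_Ĩ)`. Doubling and `⟨u⁻¹⟩_I ≤ 2⟨u⁻¹⟩_Ĩ`
give `⟨u⁻¹⟩_I/⟨w⟩_I ≤ D⟨u⁻¹⟩_Ĩ/⟨w⟩_Ĩ`, and the `A₂` condition on `Ĩ` absorbs `⟨vw²⟩_Ĩ`, so the
summand of `Q_J` at `I` is at most `AD²/4` times the Carleson summand at `Ĩ`. Every `Ĩ ⊆ J` is
the parent of at most two `I ⊊ J`, whence `Q_J ≤ (AD²C/2)⟨u⁻¹⟩_J`.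
-/

lemma len_pos (j : ℤ) : 0 < len j := zpow_pos two_pos _

lemma len_sub_one (j : ℤ) : len (j - 1) = 2 * len j := by
  rw [len, len, ← zpow_one_add₀ two_ne_zero]
  congr 1
  ring

lemma dI_eq_Ico (k j : ℤ) : dI k j = Ico (k * len j) ((k + 1) * len j) := rfl

lemma dI_nonempty (k j : ℤ) : (dI k j).Nonempty := by
  rw [dI_eq_Ico]
  exact nonempty_Ico.2 (by nlinarith [len_pos j])

lemma fdiv_two_cases (k : ℤ) : k = 2 * k.fdiv 2 ∨ k = 2 * k.fdiv 2 + 1 := by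
  rw [Int.fdiv_eq_ediv_of_nonneg k zero_le_two]
  omega

lemma dI_union_dI (m j : ℤ) : dI (2 * m) j ∪ dI (2 * m + 1) j = dI m (j - 1) := by
  have h := len_pos j
  simp only [dI_eq_Ico, len_sub_one]
  push_cast
  rw [Ico_union_Ico_eq_Ico (by nlinarith) (by nlinarith)]
  congr 1 <;> ring

lemma disjoint_dI_dI (m j : ℤ) : Disjoint (dI (2 * m) j) (dI (2 * m + 1) j) := by
  simp only [dI_eq_Ico]
  push_cast
  exact Ico_disjoint_Ico_same

lemma dI_subset_dpar (k j : ℤ) : dI k j ⊆ dpar k j := by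
  rw [dpar, ← dI_union_dI]
  rcases fdiv_two_cases k with hk | hk
  · exact hk ▸ subset_union_left
  · exact hk ▸ subset_union_right

/-- After scaling by `len j`, both intervals have integer endpoints. -/
lemma dI_subset_dI_of_le {k j k₀ j₀ : ℤ} (hj : j₀ ≤ j) (h : (dI k j ∩ dI k₀ j₀).Nonempty) :
    dI k j ⊆ dI k₀ j₀ := by
  obtain ⟨N, hN⟩ : ∃ N : ℤ, len j₀ = N * len j := by
    refine ⟨2 ^ (j - j₀).toNat, ?_⟩
    rw [len, len, Int.cast_pow, Int.cast_two, ← zpow_natCast, Int.toNat_of_nonneg (by omega),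
      ← zpow_add₀ two_ne_zero]
    ring_nf
  have hl := len_pos j
  rw [dI_eq_Ico, dI_eq_Ico] at h
  obtain ⟨x, ⟨hx₁, hx₂⟩, hx₃, hx₄⟩ := h
  rw [hN] at hx₃ hx₄
  have h₁ : k₀ * N < k + 1 := by
    have : ((k₀ * N : ℤ) : ℝ) < k + 1 := lt_of_mul_lt_mul_right (by push_cast; nlinarith) hl.le
    exact_mod_cast this
  have h₂ : k < (k₀ + 1) * N := by
    have : (k : ℝ) < ((k₀ + 1) * N : ℤ) := lt_of_mul_lt_mul_right (by push_cast; nlinarith) hl.le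
    exact_mod_cast this
  have h₁' : ((k₀ * N : ℤ) : ℝ) ≤ k := by exact_mod_cast (by omega : k₀ * N ≤ k)
  have h₂' : (k : ℝ) + 1 ≤ ((k₀ + 1) * N : ℤ) := by exact_mod_cast (by omega : k + 1 ≤ (k₀ + 1) * N)
  push_cast at h₁' h₂'
  rw [dI_eq_Ico, dI_eq_Ico, hN]
  exact Ico_subset_Ico (by nlinarith) (by nlinarith)

lemma lt_of_dI_ssubset {k j k₀ j₀ : ℤ} (h : dI k j ⊂ dI k₀ j₀) : j₀ < j := by
  by_contra! hj
  refine h.not_subset (dI_subset_dI_of_le hj ?_)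
  rw [inter_eq_right.2 h.subset]
  exact dI_nonempty k j

lemma dpar_subset_of_dI_ssubset {k j k₀ j₀ : ℤ} (h : dI k j ⊂ dI k₀ j₀) : dpar k j ⊆ dI k₀ j₀ := by
  refine dI_subset_dI_of_le (by linarith [lt_of_dI_ssubset h]) ?_
  obtain ⟨x, hx⟩ := dI_nonempty k j
  exact ⟨x, dI_subset_dpar k j hx, h.subset hx⟩

lemma pavg_eq_lavg (g : ℝ → ℝ) (k j : ℤ) : pavg g k j = lavg g (k.fdiv 2) (j - 1) := rfl

lemma two_mul_pavg (g : ℝ → ℝ) (k j : ℤ) : 2 * pavg g k j = (∫ x in dpar k j, g x) / len j := by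
  rw [pavg, len_sub_one]
  field_simp [(len_pos j).ne']

lemma two_mul_lavg_sub_one {g : ℝ → ℝ} (hg : ∀ k j, IntegrableOn g (dI k j)) (m j : ℤ) :
    2 * lavg g m (j - 1) = lavg g (2 * m) j + lavg g (2 * m + 1) j := by
  rw [lavg, lavg, lavg, ← dI_union_dI,
    setIntegral_union (disjoint_dI_dI m j) measurableSet_Ico (hg _ _) (hg _ _), len_sub_one]
  field_simp [(len_pos j).ne']

lemma one_sub_lavg_div_pavg_sq {g : ℝ → ℝ} (hg : ∀ k j, IntegrableOn g (dI k j)) (k j : ℤ)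
    (hpos : pavg g k j ≠ 0) :
    (1 - lavg g k j / pavg g k j) ^ 2 = (Δ g (k.fdiv 2) (j - 1) / (2 * pavg g k j)) ^ 2 := by
  rw [pavg_eq_lavg] at hpos ⊢
  rw [Δ, sub_add_cancel]
  have hsum := two_mul_lavg_sub_one hg (k.fdiv 2) j
  rcases fdiv_two_cases k with hk | hk <;> generalize k.fdiv 2 = m at hk hsum hpos ⊢ <;> subst hk
  · congr 1
    field_simp
    linarith
  · rw [← neg_sq]
    congr 1
    field_simp
    linarith

lemma lavg_le_two_mul_pavg {g : ℝ → ℝ} (hg : 0 ≤ᵐ[volume] g)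
    (hint : ∀ k j, IntegrableOn g (dI k j)) (k j : ℤ) : lavg g k j ≤ 2 * pavg g k j := by
  rw [two_mul_pavg, lavg]
  exact div_le_div_of_nonneg_right
    (setIntegral_mono_set (hint _ _) (ae_restrict_of_ae hg) (dI_subset_dpar k j).eventuallyLE)
    (len_pos j).le

lemma two_mul_pavg_le_of_doubling {w : ℝ → ℝ} {D : ℝ} {k j : ℤ}
    (h : ∫ x in dpar k j, w x ≤ D * ∫ x in dI k j, w x) : 2 * pavg w k j ≤ D * lavg w k j := by
  rw [two_mul_pavg, lavg, ← mul_div_assoc]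
  gcongr
  exact (len_pos j).le

lemma lavg_nonneg {g : ℝ → ℝ} (hg : 0 ≤ᵐ[volume] g) (k j : ℤ) : 0 ≤ lavg g k j :=
  div_nonneg (setIntegral_nonneg_of_ae hg) (len_pos j).le

/- The Carleson sum and `Q_J(u,v,w)` are the sums of these over `I ⊆ J`, resp. `I ⊊ J`,
with `a = u⁻¹` and `b = v w²`. -/
noncomputable def carlesonSummand (w a : ℝ → ℝ) (k j : ℤ) : ℝ :=
  len j * (Δ w k j / lavg w k j) ^ 2 * lavg a k j

noncomputable def qSummand (a b w : ℝ → ℝ) (k j : ℤ) : ℝ :=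
  len (j - 1) * (lavg a k j / lavg w k j) ^ 2 * (1 - lavg w k j / pavg w k j) ^ 2 * pavg b k j

lemma two_scale_estimate {l aI wI aP wP bP δ D A : ℝ} (hl : 0 ≤ l) (haI : 0 ≤ aI) (hwI : 0 < wI)
    (haP : 0 ≤ aP) (hwP : 0 < wP) (hbP : 0 ≤ bP) (ha : aI ≤ 2 * aP) (hw : 2 * wP ≤ D * wI)
    (hA : aP * bP ≤ A * wP ^ 2) :
    l * (aI / wI) ^ 2 * (δ / (2 * wP)) ^ 2 * bP ≤ A * D ^ 2 / 4 * (l * (δ / wP) ^ 2 * aP) := by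
  have hratio : aI / wI ≤ D * aP / wP := by
    rw [div_le_div_iff₀ hwI hwP]
    nlinarith
  calc l * (aI / wI) ^ 2 * (δ / (2 * wP)) ^ 2 * bP
      ≤ l * (D * aP / wP) ^ 2 * (δ / (2 * wP)) ^ 2 * bP := by gcongr
    _ = D ^ 2 / 4 * (l * (δ / wP) ^ 2 * aP) * (aP * bP) / wP ^ 2 := by
        field_simp
        ring
    _ ≤ D ^ 2 / 4 * (l * (δ / wP) ^ 2 * aP) * (A * wP ^ 2) / wP ^ 2 := by gcongr
    _ = A * D ^ 2 / 4 * (l * (δ / wP) ^ 2 * aP) := by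
        field_simp

lemma qSummand_le_carlesonSummand_parent {a b w : ℝ → ℝ} {D A : ℝ}
    (ha : 0 ≤ᵐ[volume] a) (hb : 0 ≤ᵐ[volume] b)
    (ha_int : ∀ k j, IntegrableOn a (dI k j)) (hw_int : ∀ k j, IntegrableOn w (dI k j))
    (hw_pos : ∀ k j, 0 < ∫ x in dI k j, w x)
    (hdoub : ∀ k j, ∫ x in dpar k j, w x ≤ D * ∫ x in dI k j, w x)
    (hA₂ : ∀ k j, lavg a k j * lavg b k j ≤ A * lavg w k j ^ 2) (k j : ℤ) :
    qSummand a b w k j ≤ A * D ^ 2 / 4 * carlesonSummand w a (k.fdiv 2) (j - 1) := by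
  have hwP : 0 < pavg w k j := div_pos (hw_pos _ _) (len_pos _)
  rw [qSummand, one_sub_lavg_div_pavg_sq hw_int k j hwP.ne']
  exact two_scale_estimate (len_pos _).le (lavg_nonneg ha k j) (div_pos (hw_pos k j) (len_pos j))
    (lavg_nonneg ha _ _) hwP (lavg_nonneg hb _ _) (lavg_le_two_mul_pavg ha ha_int k j)
    (two_mul_pavg_le_of_doubling (hdoub k j)) (hA₂ _ _)

lemma ENNReal.tsum_le_two_mul_tsum_of_injective {α β : Type*} {f : α → ℝ≥0∞} {g : β → ℝ≥0∞}
    (Φ : α → β × Bool) (hΦ : Function.Injective Φ) (hfg : ∀ x, f x ≤ g (Φ x).1) :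
    ∑' x, f x ≤ 2 * ∑' y, g y :=
  calc ∑' x, f x ≤ ∑' x, g (Φ x).1 := ENNReal.tsum_le_tsum hfg
    _ ≤ ∑' q : β × Bool, g q.1 := ENNReal.tsum_comp_le_tsum_of_injective hΦ fun q => g q.1
    _ = 2 * ∑' y, g y := by
        rw [ENNReal.tsum_prod (f := fun y _ => g y)]
        simp_rw [tsum_bool, ← two_mul]
        exact ENNReal.tsum_mul_left

/-- Each `I ⊊ J` is determined by its parent `Ĩ ⊆ J` and its parity. -/
lemma tsum_ssubset_le_two_mul_tsum_subset {k₀ j₀ : ℤ} (f g : ℤ × ℤ → ℝ≥0∞)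
    (hfg : ∀ k j, f (k, j) ≤ g (k.fdiv 2, j - 1)) :
    ∑' p : {p : ℤ × ℤ // dI p.1 p.2 ⊂ dI k₀ j₀}, f p ≤
      2 * ∑' p : {p : ℤ × ℤ // dI p.1 p.2 ⊆ dI k₀ j₀}, g p := by
  refine ENNReal.tsum_le_two_mul_tsum_of_injective
    (fun p => (⟨(p.1.1.fdiv 2, p.1.2 - 1), dpar_subset_of_dI_ssubset p.2⟩, decide (Even p.1.1)))
    ?_ fun p => hfg p.1.1 p.1.2
  rintro ⟨⟨k, j⟩, _⟩ ⟨⟨k', j'⟩, _⟩ h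
  simp only [Prod.mk.injEq, Subtype.mk.injEq, decide_eq_decide, Int.even_iff,
    Int.fdiv_eq_ediv_of_nonneg _ zero_le_two] at h ⊢
  omega

theorem QJ_bound_general (D A C : ℝ) (hA : 0 ≤ A) (hC : 0 ≤ C) :
    ∃ C' : ℝ, 0 ≤ C' ∧
      ∀ u v w : ℝ → ℝ,
        (∀ᵐ x ∂(volume : Measure ℝ), 0 < u x) →
        (∀ᵐ x ∂(volume : Measure ℝ), 0 < v x) →
        (∀ᵐ x ∂(volume : Measure ℝ), 0 < w x) →
        (∀ k j : ℤ, IntegrableOn w (dI k j)) →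
        (∀ k j : ℤ, IntegrableOn (fun x => (u x)⁻¹) (dI k j)) →
        (∀ k j : ℤ, IntegrableOn (fun x => v x * (w x) ^ 2) (dI k j)) →
        (∀ k j : ℤ, 0 < ∫ x in dI k j, w x) →
        -- dyadic doubling with constant `D`
        (∀ k j : ℤ, (∫ x in dpar k j, w x) ≤ D * ∫ x in dI k j, w x) →
        -- joint `A₂` condition with characteristic `A`
        (∀ k j : ℤ,
          lavg (fun x => (u x)⁻¹) k j * lavg (fun x => v x * (w x) ^ 2) k j ≤
            A * (lavg w k j) ^ 2) →
        -- `u⁻¹`-Carleson condition with constant `C`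
        (∀ k₀ j₀ : ℤ,
          (∑' p : {p : ℤ × ℤ // dI p.1 p.2 ⊆ dI k₀ j₀},
            ENNReal.ofReal (len p.1.2 * (Δ w p.1.1 p.1.2 / lavg w p.1.1 p.1.2) ^ 2 *
              lavg (fun x => (u x)⁻¹) p.1.1 p.1.2)) ≤
            ENNReal.ofReal (C * len j₀ * lavg (fun x => (u x)⁻¹) k₀ j₀)) →
        -- conclusion: the `Q_J` bound
        ∀ k₀ j₀ : ℤ,
          (∑' p : {p : ℤ × ℤ // dI p.1 p.2 ⊂ dI k₀ j₀},
            ENNReal.ofReal (len (p.1.2 - 1) *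
              (lavg (fun x => (u x)⁻¹) p.1.1 p.1.2 / lavg w p.1.1 p.1.2) ^ 2 *
              (1 - lavg w p.1.1 p.1.2 / pavg w p.1.1 p.1.2) ^ 2 *
              pavg (fun x => v x * (w x) ^ 2) p.1.1 p.1.2)) ≤
            ENNReal.ofReal (C' * len j₀ * lavg (fun x => (u x)⁻¹) k₀ j₀) := by
  refine ⟨A * D ^ 2 * C / 2, by positivity, ?_⟩
  intro u v w hu hv _ hw_int hu_int _ hw_pos hdoub hA₂ hCar k₀ j₀
  set a : ℝ → ℝ := fun x => (u x)⁻¹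
  set b : ℝ → ℝ := fun x => v x * w x ^ 2
  have ha : 0 ≤ᵐ[volume] a := hu.mono fun x hx => (inv_pos.2 hx).le
  have hb : 0 ≤ᵐ[volume] b := hv.mono fun x hx => by positivity
  have hterm (k j : ℤ) : ENNReal.ofReal (qSummand a b w k j) ≤
      ENNReal.ofReal (A * D ^ 2 / 4) * ENNReal.ofReal (carlesonSummand w a (k.fdiv 2) (j - 1)) := by
    rw [← ENNReal.ofReal_mul (by positivity)]
    exact ENNReal.ofReal_le_ofReal
      (qSummand_le_carlesonSummand_parent ha hb hu_int hw_int hw_pos hdoub hA₂ k j)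
  calc _ ≤ 2 * ∑' p : {p : ℤ × ℤ // dI p.1 p.2 ⊆ dI k₀ j₀},
          ENNReal.ofReal (A * D ^ 2 / 4) * ENNReal.ofReal (carlesonSummand w a p.1.1 p.1.2) :=
        tsum_ssubset_le_two_mul_tsum_subset (fun p => ENNReal.ofReal (qSummand a b w p.1 p.2))
          (fun p => ENNReal.ofReal (A * D ^ 2 / 4) * ENNReal.ofReal (carlesonSummand w a p.1 p.2))
          hterm
    _ = ENNReal.ofReal (A * D ^ 2 / 2) * ∑' p : {p : ℤ × ℤ // dI p.1 p.2 ⊆ dI k₀ j₀},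
          ENNReal.ofReal (carlesonSummand w a p.1.1 p.1.2) := by
        rw [ENNReal.tsum_mul_left, ← mul_assoc, ← ENNReal.ofReal_ofNat 2,
          ← ENNReal.ofReal_mul zero_le_two]
        congr 2
        ring
    _ ≤ ENNReal.ofReal (A * D ^ 2 / 2) * ENNReal.ofReal (C * len j₀ * lavg a k₀ j₀) := by
        gcongr
        exact hCar k₀ j₀
    _ = ENNReal.ofReal (A * D ^ 2 * C / 2 * len j₀ * lavg a k₀ j₀) := by
        rw [← ENNReal.ofReal_mul (by positivity)]
        congr 1
        ring

/-- The `Q_J` bound (Lemma 6 of the paper): for `w` dyadic doubling with constant `D`,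
`(uw,vw) ∈ A₂^d(w)` with characteristic `A` (in the equivalent Lebesgue-average form),
and the `u⁻¹`-Carleson condition for `{|I||Δ_I w/⟨w⟩_I|²}`, the quantity `Q_J(u,v,w)`
is bounded by `C'·⟨u⁻¹⟩_J` with `C'` depending only on `D`, `A`, `C`. -/
theorem QJ_bound (D A C : ℝ) (hD : 1 ≤ D) (hA : 0 ≤ A) (hC : 0 ≤ C) :
    ∃ C' : ℝ, 0 ≤ C' ∧
      ∀ u v w : ℝ → ℝ,
        (∀ᵐ x ∂(volume : Measure ℝ), 0 < u x) →
        (∀ᵐ x ∂(volume : Measure ℝ), 0 < v x) →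
        (∀ᵐ x ∂(volume : Measure ℝ), 0 < w x) →
        (∀ k j : ℤ, IntegrableOn w (dI k j)) →
        (∀ k j : ℤ, IntegrableOn (fun x => (u x)⁻¹) (dI k j)) →
        (∀ k j : ℤ, IntegrableOn (fun x => v x * (w x) ^ 2) (dI k j)) →
        (∀ k j : ℤ, 0 < ∫ x in dI k j, w x) →
        -- dyadic doubling with constant `D`
        (∀ k j : ℤ, (∫ x in dpar k j, w x) ≤ D * ∫ x in dI k j, w x) →
        -- joint `A₂` condition with characteristic `A`
        (∀ k j : ℤ,
          lavg (fun x => (u x)⁻¹) k j * lavg (fun x => v x * (w x) ^ 2) k j ≤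
            A * (lavg w k j) ^ 2) →
        -- `u⁻¹`-Carleson condition with constant `C`
        (∀ k₀ j₀ : ℤ,
          (∑' p : {p : ℤ × ℤ // dI p.1 p.2 ⊆ dI k₀ j₀},
            ENNReal.ofReal (len p.1.2 * (Δ w p.1.1 p.1.2 / lavg w p.1.1 p.1.2) ^ 2 *
              lavg (fun x => (u x)⁻¹) p.1.1 p.1.2)) ≤
            ENNReal.ofReal (C * len j₀ * lavg (fun x => (u x)⁻¹) k₀ j₀)) →
        -- conclusion: the `Q_J` bound
        ∀ k₀ j₀ : ℤ,
          (∑' p : {p : ℤ × ℤ // dI p.1 p.2 ⊂ dI k₀ j₀},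
            ENNReal.ofReal (len (p.1.2 - 1) *
              (lavg (fun x => (u x)⁻¹) p.1.1 p.1.2 / lavg w p.1.1 p.1.2) ^ 2 *
              (1 - lavg w p.1.1 p.1.2 / pavg w p.1.1 p.1.2) ^ 2 *
              pavg (fun x => v x * (w x) ^ 2) p.1.1 p.1.2)) ≤
            ENNReal.ofReal (C' * len j₀ * lavg (fun x => (u x)⁻¹) k₀ j₀) :=
  QJ_bound_general D A C hA hC
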